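/- For all integers L ≥ 0 and m ≥ 0: sum over t ≥ 0 of q^(t^2 + m t) qbinom(L-t, t) = (-1)^m q^{-binom(m,2)} d_{m-1}(q) e_{L+m}(q) + (-1)^{m+1} q^{-binom(m,2)} e_{m-1}(q) d_{L+m}(q), as an identity of rational functions (Laurent polynomials) in q. -/
import Mathlib


open Finset

/-- The formal variable `q` in the field of rational functions over `ℚ`. -/
noncomputable def q : RatFunc ℚ := RatFunc.X

/-- Gaussian binomial coefficient `qbinom(N, K)` in the variable `p`;
it is `0` when `K < 0` or `K > N`. -/
noncomputable def qbin (p : RatFunc ℚ) (N K : ℤ) : RatFunc ℚ :=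
  if 0 ≤ K ∧ K ≤ N then
    (∏ j ∈ Finset.range (N - K).toNat, (1 - p ^ (K + 1 + (j : ℤ)))) /
    (∏ j ∈ Finset.range (N - K).toNat, (1 - p ^ ((j : ℤ) + 1)))
  else 0

/-- `e_L(p) = Σ_{t≥0} p^{t²} qbinom(L-t, t)` for `L ≥ 0`. -/
noncomputable def eN (p : RatFunc ℚ) (L : ℕ) : RatFunc ℚ :=
  ∑ t ∈ Finset.range (L + 1), p ^ (t ^ 2) * qbin p ((L : ℤ) - t) t

/-- `d_L(p) = Σ_{t≥0} p^{t²+t} qbinom(L-t-1, t)` for `L ≥ 0`. -/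
noncomputable def dN (p : RatFunc ℚ) (L : ℕ) : RatFunc ℚ :=
  ∑ t ∈ Finset.range (L + 1), p ^ (t ^ 2 + t) * qbin p ((L : ℤ) - t - 1) t

/-- `e_m(p)` extended to all integers: for `L ≥ 1`,
`e_{-L}(p) = (-1)^L p^{binom(L,2)} d_{L-1}(1/p)`. -/
noncomputable def eZ (p : RatFunc ℚ) (m : ℤ) : RatFunc ℚ :=
  if 0 ≤ m then eN p m.toNat
  else (-1) ^ (-m).toNat * p ^ ((-m).toNat.choose 2) * dN p⁻¹ ((-m).toNat - 1)

/-- `d_m(p)` extended to all integers: for `L ≥ 1`,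
`d_{-L}(p) = (-1)^{L+1} p^{binom(L,2)} e_{L-1}(1/p)`. -/
noncomputable def dZ (p : RatFunc ℚ) (m : ℤ) : RatFunc ℚ :=
  if 0 ≤ m then dN p m.toNat
  else (-1) ^ ((-m).toNat + 1) * p ^ ((-m).toNat.choose 2) * eN p⁻¹ ((-m).toNat - 1)


lemma q_ne_zero : q ≠ 0 := by
  simpa [q] using RatFunc.X_ne_zero

lemma q_pow_ne_one (n : ℕ) (hn : 1 ≤ n) : q ^ n ≠ 1 := by
  intro h
  have : (Polynomial.X : Polynomial ℚ) ^ n = 1 := by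
    apply RatFunc.algebraMap_injective ℚ
    simpa [q, RatFunc.algebraMap_X] using h
  have := congrArg (fun p => Polynomial.coeff p 0) this
  simp [Polynomial.coeff_X_pow] at this; omega

lemma one_sub_q_zpow_ne (j : ℤ) (hj : 1 ≤ j) : 1 - q ^ j ≠ 0 := by
  intro h
  have hq : q ^ j = 1 := by linear_combination -h
  rw [show j = (j.toNat : ℤ) by omega, zpow_natCast] at hq
  exact q_pow_ne_one j.toNat (by omega) hq

lemma den_ne_zero (a : ℕ) : (∏ j ∈ Finset.range a, (1 - q ^ ((j : ℤ) + 1))) ≠ 0 := by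
  apply Finset.prod_ne_zero_iff.mpr
  intro j _
  exact one_sub_q_zpow_ne _ (by omega)

lemma qbin_neg (N K : ℤ) (h : K < 0) : qbin q N K = 0 := by
  rw [qbin, if_neg]; omega

lemma qbin_gt (N K : ℤ) (h : N < K) : qbin q N K = 0 := by
  rw [qbin, if_neg]; omega

lemma qbin_self (N : ℤ) (h : 0 ≤ N) : qbin q N N = 1 := by
  rw [qbin, if_pos ⟨h, le_refl N⟩]
  simp

lemma qbin_zero (N : ℤ) (h : 0 ≤ N) : qbin q N 0 = 1 := by
  rw [qbin, if_pos ⟨le_refl 0, h⟩]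
  rw [show (∏ j ∈ Finset.range (N - 0).toNat, (1 - q ^ ((0:ℤ) + 1 + (j : ℤ))))
      = ∏ j ∈ Finset.range (N - 0).toNat, (1 - q ^ ((j:ℤ) + 1)) from
    Finset.prod_congr rfl (fun j _ => by ring_nf)]
  exact div_self (den_ne_zero _)

lemma qbin_pascal (n k : ℤ) (hn : 1 ≤ n) :
    qbin q n k = qbin q (n-1) k + q ^ (n - k) * qbin q (n-1) (k-1) := by
  rcases lt_or_ge k 0 with hk | hk
  · rw [qbin_neg _ _ hk, qbin_neg _ _ hk, qbin_neg _ _ (by omega)]; ring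
  rcases eq_or_lt_of_le hk with hk0 | hk1
  · -- k = 0
    rw [← hk0, qbin_zero _ (by omega), qbin_zero _ (by omega), qbin_neg _ _ (by omega)]
    ring
  rcases lt_or_ge (n : ℤ) k with hgt | hle
  · rw [qbin_gt _ _ hgt, qbin_gt _ _ (by omega), qbin_gt _ _ (by omega)]; ring
  rcases eq_or_lt_of_le hle with heq | hlt
  · -- k = n
    rw [← heq, qbin_self _ (by omega), qbin_gt _ _ (by omega), qbin_self _ (by omega)]
    simp
  -- generic: 1 ≤ k ≤ n-1
  have hb : ∃ b : ℕ, (n - 1 - k) = (b : ℤ) := ⟨(n-1-k).toNat, by omega⟩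
  obtain ⟨b, hbv⟩ := hb
  have h1 : (n - k).toNat = b + 1 := by omega
  have h2 : (n - 1 - k).toNat = b := by omega
  have h3 : (n - 1 - (k - 1)).toNat = b + 1 := by omega
  rw [qbin, if_pos ⟨hk, by omega⟩, qbin, if_pos ⟨hk, by omega⟩,
      qbin, if_pos ⟨by omega, by omega⟩, h1, h2, h3]
  set Nb := ∏ j ∈ Finset.range b, (1 - q ^ (k + 1 + (j : ℤ))) with hNb
  set Db := ∏ j ∈ Finset.range b, (1 - q ^ ((j : ℤ) + 1)) with hDb
  have e1 : ∏ j ∈ Finset.range (b+1), (1 - q ^ (k + 1 + (j : ℤ)))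
      = Nb * (1 - q ^ (k + 1 + (b : ℤ))) := Finset.prod_range_succ _ _
  have e2 : ∏ j ∈ Finset.range (b+1), (1 - q ^ ((j : ℤ) + 1))
      = Db * (1 - q ^ ((b : ℤ) + 1)) := Finset.prod_range_succ _ _
  have e3 : ∏ j ∈ Finset.range (b+1), (1 - q ^ (k - 1 + 1 + (j : ℤ)))
      = (1 - q ^ k) * Nb := by
    rw [Finset.prod_range_succ' (fun j => 1 - q ^ (k - 1 + 1 + (j : ℤ))) b]
    rw [show (1 - q ^ (k - 1 + 1 + ((0:ℕ) : ℤ))) = 1 - q ^ k by norm_num]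
    rw [mul_comm, hNb]
    congr 1
    apply Finset.prod_congr rfl
    intro j _
    congr 1
    push_cast
    ring_nf
  rw [e1, e2, e3]
  have hu : (1 : RatFunc ℚ) - q ^ ((b:ℤ) + 1) ≠ 0 := one_sub_q_zpow_ne _ (by omega)
  have hDb0 : Db ≠ 0 := den_ne_zero b
  have hnk : q ^ (n - k) = q ^ ((b:ℤ) + 1) := by rw [show n - k = (b:ℤ)+1 by omega]
  have hsplit : q ^ (k + 1 + (b:ℤ)) = q ^ k * q ^ ((b:ℤ) + 1) := by
    rw [← zpow_add₀ q_ne_zero]; ring_nf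
  rw [hnk, hsplit]
  field_simp
  ring

noncomputable def F (L m : ℕ) : RatFunc ℚ :=
  ∑ t ∈ Finset.range (L + 1), q ^ (t ^ 2 + m * t) * qbin q ((L : ℤ) - t) t

lemma F_rec (L m : ℕ) : F (L+2) m = F (L+1) m + q ^ (L+m+1) * F L m := by
  have hlast : q ^ ((L+2) ^ 2 + m * (L+2)) * qbin q (((L+2 : ℕ) : ℤ) - ((L+2 : ℕ) : ℤ)) (L+2) = 0 := by
    rw [qbin_gt _ _ (by push_cast; omega)]; ring
  rw [F, Finset.sum_range_succ]
  push_cast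
  push_cast at hlast
  rw [hlast, add_zero]
  have step : ∀ t ∈ Finset.range (L+2),
      q ^ (t ^ 2 + m * t) * qbin q ((L:ℤ) + 2 - t) t
        = q ^ (t ^ 2 + m * t) * qbin q ((L:ℤ) + 1 - t) t
          + q ^ (t ^ 2 + m * t) * q ^ ((L:ℤ) + 2 - 2 * t) * qbin q ((L:ℤ) + 1 - t) ((t:ℤ) - 1) := by
    intro t ht
    simp only [Finset.mem_range] at ht
    rw [qbin_pascal ((L:ℤ) + 2 - t) t (by omega)]
    rw [show (L:ℤ) + 2 - t - 1 = (L:ℤ) + 1 - t by ring,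
        show (L:ℤ) + 2 - t - t = (L:ℤ) + 2 - 2*t by ring]
    ring
  rw [Finset.sum_congr rfl step, Finset.sum_add_distrib]
  have hA : (∑ t ∈ Finset.range (L+2), q ^ (t ^ 2 + m * t) * qbin q ((L:ℤ) + 1 - t) t)
      = F (L+1) m := by
    rw [F]
    apply Finset.sum_congr rfl
    intro t ht
    push_cast
    rfl
  rw [hA]
  congr 1
  rw [Finset.sum_range_succ' (fun t => q ^ (t ^ 2 + m * t) * q ^ ((L:ℤ) + 2 - 2 * t) * qbin q ((L:ℤ) + 1 - t) ((t:ℤ) - 1)) (L+1)]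
  rw [show qbin q ((L:ℤ) + 1 - (0:ℕ)) (((0:ℕ):ℤ) - 1) = 0 from qbin_neg _ _ (by norm_num)]
  rw [F, Finset.mul_sum]
  simp only [mul_zero, add_zero]
  apply Finset.sum_congr rfl
  intro t ht
  have e1 : ((t:ℤ) + 1 : ℤ) - 1 = (t : ℤ) := by ring
  have e2 : (L:ℤ) + 1 - ((t:ℕ)+1 : ℕ) = (L:ℤ) - t := by push_cast; ring
  push_cast
  rw [show (L:ℤ) + 1 - ((t:ℤ)+1) = (L:ℤ) - t by ring, show (t:ℤ) + 1 - 1 = (t:ℤ) by ring]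
  have hz : q ^ ((t+1) ^ 2 + m * (t+1)) * q ^ ((L:ℤ) + 2 - 2 * ((t:ℤ)+1))
      = q ^ (L + m + 1) * q ^ (t ^ 2 + m * t) := by
    rw [← zpow_natCast q ((t+1) ^ 2 + m * (t+1)), ← zpow_natCast q (L+m+1), ← zpow_natCast q (t^2+m*t),
        ← zpow_add₀ q_ne_zero, ← zpow_add₀ q_ne_zero]
    congr 1
    push_cast
    ring
  calc q ^ ((t+1) ^ 2 + m * (t+1)) * q ^ ((L:ℤ) + 2 - 2 * ((t:ℤ)+1)) * qbin q ((L:ℤ) - t) ((t:ℤ))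
      = (q ^ ((t+1) ^ 2 + m * (t+1)) * q ^ ((L:ℤ) + 2 - 2 * ((t:ℤ)+1))) * qbin q ((L:ℤ) - t) ((t:ℤ)) := by ring
    _ = (q ^ (L + m + 1) * q ^ (t ^ 2 + m * t)) * qbin q ((L:ℤ) - t) ((t:ℤ)) := by rw [hz]
    _ = q ^ (L + m + 1) * (q ^ (t ^ 2 + m * t) * qbin q ((L:ℤ) - t) ((t:ℤ))) := by ring

lemma eN_eq_F (L : ℕ) : eN q L = F L 0 := by
  rw [eN, F]
  apply Finset.sum_congr rfl
  intro t ht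
  norm_num

lemma dN_eq_F (L : ℕ) : dN q (L + 1) = F L 1 := by
  rw [dN, F, Finset.sum_range_succ]
  rw [show qbin q (((L+1:ℕ):ℤ) - ((L+1:ℕ):ℤ) - 1) ((L+1:ℕ):ℤ) = 0 from
    qbin_gt _ _ (by push_cast; omega)]
  simp only [mul_zero, add_zero]
  apply Finset.sum_congr rfl
  intro t ht
  rw [show ((L+1:ℕ):ℤ) - (t:ℤ) - 1 = (L:ℤ) - t by push_cast; ring,
      show t^2 + t = t^2 + 1 * t by ring]

lemma eN_zero : eN q 0 = 1 := by
  rw [eN]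
  simp [qbin_zero 0 le_rfl]

lemma eN_one : eN q 1 = 1 := by
  rw [eN, Finset.sum_range_succ, Finset.sum_range_succ]
  norm_num [qbin_zero 1 (by norm_num), qbin_gt 0 1 (by norm_num)]

lemma dN_zero : dN q 0 = 0 := by
  rw [dN, Finset.sum_range_one]
  norm_num [qbin_gt (-1) 0 (by norm_num)]

lemma dN_one : dN q 1 = 1 := by
  rw [dN, Finset.sum_range_succ, Finset.sum_range_succ]
  rw [show ((1:ℕ):ℤ) - ((0:ℕ):ℤ) - 1 = 0 by norm_num,
      show ((1:ℕ):ℤ) - ((1:ℕ):ℤ) - 1 = -1 by norm_num]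
  norm_num [qbin_zero 0 le_rfl, qbin_gt (-1) 1 (by norm_num)]

lemma dN_two : dN q 2 = 1 := by
  rw [dN, Finset.sum_range_succ, Finset.sum_range_succ, Finset.sum_range_succ]
  rw [show ((2:ℕ):ℤ) - ((0:ℕ):ℤ) - 1 = 1 by norm_num,
      show ((2:ℕ):ℤ) - ((1:ℕ):ℤ) - 1 = 0 by norm_num,
      show ((2:ℕ):ℤ) - ((2:ℕ):ℤ) - 1 = -1 by norm_num]
  norm_num [qbin_zero 1 (by norm_num), qbin_gt 0 1 (by norm_num), qbin_gt (-1) 2 (by norm_num)]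

lemma eN_rec (N : ℕ) : eN q (N + 2) = eN q (N + 1) + q ^ (N + 1) * eN q N := by
  rw [eN_eq_F, eN_eq_F, eN_eq_F]
  simpa using F_rec N 0

lemma dN_rec (N : ℕ) : dN q (N + 2) = dN q (N + 1) + q ^ (N + 1) * dN q N := by
  cases N with
  | zero => rw [dN_two, dN_one, dN_zero]; ring
  | succ k =>
    rw [show k + 1 + 2 = (k + 2) + 1 by ring, dN_eq_F, dN_eq_F, dN_eq_F, F_rec]

lemma qbin_zero_zero (p : RatFunc ℚ) : qbin p 0 0 = 1 := by
  rw [qbin, if_pos ⟨le_rfl, le_rfl⟩]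
  simp

lemma qbin_not (p : RatFunc ℚ) (N K : ℤ) (h : ¬(0 ≤ K ∧ K ≤ N)) : qbin p N K = 0 := by
  rw [qbin, if_neg h]

lemma eN_zero' (p : RatFunc ℚ) : eN p 0 = 1 := by
  rw [eN, Finset.sum_range_one]
  norm_num [qbin_zero_zero]

lemma dN_zero' (p : RatFunc ℚ) : dN p 0 = 0 := by
  rw [dN, Finset.sum_range_one]
  norm_num [qbin_not p (-1) 0 (by omega)]

lemma eZ_natCast (n : ℕ) : eZ q (n : ℤ) = eN q n := by
  rw [eZ, if_pos (Int.natCast_nonneg n), Int.toNat_natCast]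

lemma dZ_natCast (n : ℕ) : dZ q (n : ℤ) = dN q n := by
  rw [dZ, if_pos (Int.natCast_nonneg n), Int.toNat_natCast]

lemma eZ_neg_one : eZ q (-1) = 0 := by
  rw [eZ, if_neg (by norm_num)]
  norm_num [dN_zero']

lemma dZ_neg_one : dZ q (-1) = 1 := by
  rw [dZ, if_neg (by norm_num)]
  norm_num [eN_zero']

lemma casW (m : ℕ) :
    dZ q ((m:ℤ) - 1) * eN q m - eZ q ((m:ℤ) - 1) * dN q m
      = (-1)^m * q^(m.choose 2) := by
  induction m with
  | zero =>
    norm_num [eZ_neg_one, dZ_neg_one, eN_zero, dN_zero]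
  | succ k ih =>
    cases k with
    | zero =>
      rw [show ((1:ℕ):ℤ) - 1 = ((0:ℕ):ℤ) by norm_num, eZ_natCast, dZ_natCast]
      norm_num [eN_zero, dN_zero, eN_one, dN_one]
    | succ j =>
      rw [show ((j+1:ℕ):ℤ) - 1 = ((j:ℕ):ℤ) by push_cast; ring, eZ_natCast, dZ_natCast] at ih
      rw [show ((j+2:ℕ):ℤ) - 1 = ((j+1:ℕ):ℤ) by push_cast; ring, eZ_natCast, dZ_natCast]
      rw [show j + 1 + 1 = j + 2 by ring, eN_rec j, dN_rec j]
      have hc : (j+2).choose 2 = (j+1).choose 2 + (j+1) := by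
        rw [Nat.choose_succ_succ (j+1) 1, Nat.choose_one_right]; ring
      rw [hc, pow_add, pow_succ]
      linear_combination (-(q ^ (j+1))) * ih

lemma casW' (m : ℕ) :
    dZ q ((m:ℤ) - 1) * eN q (m + 1) - eZ q ((m:ℤ) - 1) * dN q (m + 1)
      = (-1)^m * q^(m.choose 2) := by
  cases m with
  | zero =>
    norm_num [eZ_neg_one, dZ_neg_one, eN_one, dN_one]
  | succ k =>
    have h := casW (k+1)
    rw [show ((k+1:ℕ):ℤ) - 1 = ((k:ℕ):ℤ) by push_cast; ring, eZ_natCast, dZ_natCast] at h ⊢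
    rw [show k + 1 + 1 = k + 2 by ring, eN_rec k, dN_rec k]
    linear_combination h

lemma F_zero (m : ℕ) : F 0 m = 1 := by
  rw [F, Finset.sum_range_one]
  norm_num [qbin_zero_zero]

lemma F_one (m : ℕ) : F 1 m = 1 := by
  rw [F, Finset.sum_range_succ, Finset.sum_range_one]
  norm_num [qbin_zero 1 (by norm_num), qbin_gt 0 1 (by norm_num)]

lemma neg_one_sq_pow (m : ℕ) : ((-1 : RatFunc ℚ))^m * (-1)^m = 1 := by
  rw [← pow_add]
  exact Even.neg_one_pow ⟨m, by ring⟩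

lemma q_zpow_cancel (c : ℕ) : q ^ (-(c : ℤ)) * q ^ c = 1 := by
  rw [← zpow_natCast q c, ← zpow_add₀ q_ne_zero]
  norm_num

lemma main (L m : ℕ) :
    F L m = (-1) ^ m * q ^ (-(m.choose 2 : ℤ)) * dZ q ((m : ℤ) - 1) * eN q (L + m)
      + (-1) ^ (m + 1) * q ^ (-(m.choose 2 : ℤ)) * eZ q ((m : ℤ) - 1) * dN q (L + m) := by
  induction L using Nat.twoStepInduction with
  | zero =>
    rw [F_zero, zero_add]
    have hW := casW m
    symm
    calc (-1) ^ m * q ^ (-(m.choose 2 : ℤ)) * dZ q ((m : ℤ) - 1) * eN q m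
          + (-1) ^ (m + 1) * q ^ (-(m.choose 2 : ℤ)) * eZ q ((m : ℤ) - 1) * dN q m
        = ((-1) ^ m * (-1) ^ m) * (q ^ (-(m.choose 2 : ℤ)) * q ^ (m.choose 2)) := by
          linear_combination ((-1:RatFunc ℚ) ^ m * q ^ (-(m.choose 2 : ℤ))) * hW
      _ = 1 := by rw [neg_one_sq_pow, q_zpow_cancel, one_mul]
  | one =>
    rw [F_one, show 1 + m = m + 1 by ring]
    have hW := casW' m
    symm
    calc (-1) ^ m * q ^ (-(m.choose 2 : ℤ)) * dZ q ((m : ℤ) - 1) * eN q (m+1)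
          + (-1) ^ (m + 1) * q ^ (-(m.choose 2 : ℤ)) * eZ q ((m : ℤ) - 1) * dN q (m+1)
        = ((-1) ^ m * (-1) ^ m) * (q ^ (-(m.choose 2 : ℤ)) * q ^ (m.choose 2)) := by
          linear_combination ((-1:RatFunc ℚ) ^ m * q ^ (-(m.choose 2 : ℤ))) * hW
      _ = 1 := by rw [neg_one_sq_pow, q_zpow_cancel, one_mul]
  | more n ih1 ih2 =>
    rw [F_rec, ih1, ih2,
        show n + 2 + m = (n + m) + 2 by ring, show n + 1 + m = (n + m) + 1 by ring,
        eN_rec (n + m), dN_rec (n + m)]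
    ring

/-- For all `L, m ≥ 0`:
`Σ_{t≥0} q^{t²+mt} qbinom(L-t,t)
  = (-1)^m q^{-binom(m,2)} d_{m-1}(q) e_{L+m}(q) + (-1)^{m+1} q^{-binom(m,2)} e_{m-1}(q) d_{L+m}(q)`. -/
theorem stmt5 (L m : ℕ) :
    ∑ t ∈ Finset.range (L + 1), q ^ (t ^ 2 + m * t) * qbin q ((L : ℤ) - t) t =
      (-1) ^ m * q ^ (-(m.choose 2 : ℤ)) * dZ q ((m : ℤ) - 1) * eZ q ((L : ℤ) + m)
      + (-1) ^ (m + 1) * q ^ (-(m.choose 2 : ℤ)) * eZ q ((m : ℤ) - 1) * dZ q ((L : ℤ) + m) := by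
  have h1 : eZ q ((L : ℤ) + m) = eN q (L + m) := by
    rw [show (L : ℤ) + m = ((L + m : ℕ) : ℤ) by push_cast; ring, eZ_natCast]
  have h2 : dZ q ((L : ℤ) + m) = dN q (L + m) := by
    rw [show (L : ℤ) + m = ((L + m : ℕ) : ℤ) by push_cast; ring, dZ_natCast]
  rw [h1, h2]
  exact main L m
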